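/- For the shallow water equations with splitting F_E(Q) = (0, v⊗q, 0) where q = Hv, the Jacobian of F_E·n with respect to Q = (η, q, b) (with H = η − b) has eigenvalues λ1 = λ2 = 0, λ3 = v·n, λ4 = 2v·n. -/

import Mathlib

/-!
Away from dry states, `u = v·n` is a rational function of `Q`, so the Jacobian is computed by
the quotient rule. The mass and bathymetry components of `F_E·n` vanish, hence so do the first
and last rows of the Jacobian, and the determinant of `X - J` reduces to `X²` times that of the
momentum block `u·I + v nᵀ`. This rank-one perturbation of `u·I` has eigenvalue `u` on `n^⊥`
and `u + v·n = 2u` on `v`.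
-/

open Polynomial

noncomputable def sweExplicitFlux (n : Fin 2 → ℝ) (Q : Fin 4 → ℝ) : Fin 4 → ℝ :=
  ![0, Q 1 * ((Q 1 * n 0 + Q 2 * n 1) / (Q 0 - Q 3)),
       Q 2 * ((Q 1 * n 0 + Q 2 * n 1) / (Q 0 - Q 3)), 0]

noncomputable def sweJacobian (n : Fin 2 → ℝ) (Q0 : Fin 4 → ℝ) : Matrix (Fin 4) (Fin 4) ℝ :=
  Matrix.of fun i j => fderiv ℝ (fun Q => sweExplicitFlux n Q i) Q0 (Pi.single j 1)

theorem hasFDerivAt_div {𝕜 E : Type*} [NontriviallyNormedField 𝕜] [NormedAddCommGroup E]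
    [NormedSpace 𝕜 E] {f g : E → 𝕜} {f' g' : E →L[𝕜] 𝕜} {x : E}
    (hf : HasFDerivAt f f' x) (hg : HasFDerivAt g g' x) (hx : g x ≠ 0) :
    HasFDerivAt (fun y => f y / g y) ((g x)⁻¹ • (f' - (f x / g x) • g')) x := by
  have h := hf.fun_mul ((hasDerivAt_inv hx).comp_hasFDerivAt x hg)
  simp only [Function.comp_def, ← div_eq_mul_inv] at h
  refine h.congr_fderiv ?_
  ext e
  simp
  field_simp
  ring

theorem fderiv_momentumFlux_apply (n : Fin 2 → ℝ) (k : Fin 4) {Q : Fin 4 → ℝ}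
    (hH : Q 0 - Q 3 ≠ 0) (e : Fin 4 → ℝ) :
    fderiv ℝ (fun P : Fin 4 → ℝ => P k * ((P 1 * n 0 + P 2 * n 1) / (P 0 - P 3))) Q e
      = e k * ((Q 1 * n 0 + Q 2 * n 1) / (Q 0 - Q 3))
        + Q k * (e 1 * n 0 + e 2 * n 1
          - (Q 1 * n 0 + Q 2 * n 1) / (Q 0 - Q 3) * (e 0 - e 3)) / (Q 0 - Q 3) := by
  have hcoord (i : Fin 4) := hasFDerivAt_apply (𝕜 := ℝ) i Q
  have hnormal : HasFDerivAt (fun P : Fin 4 → ℝ => P 1 * n 0 + P 2 * n 1) _ Q :=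
    ((hcoord 1).mul_const (n 0)).add ((hcoord 2).mul_const (n 1))
  have hdepth : HasFDerivAt (fun P : Fin 4 → ℝ => P 0 - P 3) _ Q := (hcoord 0).sub (hcoord 3)
  rw [((hcoord k).fun_mul (hasFDerivAt_div hnormal hdepth hH)).fderiv]
  simp
  ring

def convectiveJacobian {R : Type*} [CommRing R] (v n : Fin 2 → R) : Matrix (Fin 4) (Fin 4) R :=
  let u := v 0 * n 0 + v 1 * n 1
  !![0, 0, 0, 0;
     -(v 0 * u), u + v 0 * n 0, v 0 * n 1, v 0 * u;
     -(v 1 * u), v 1 * n 0, u + v 1 * n 1, v 1 * u;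
     0, 0, 0, 0]

theorem charpoly_convectiveJacobian {R : Type*} [CommRing R] (v n : Fin 2 → R) :
    (convectiveJacobian v n).charpoly
      = X ^ 2 * (X - C (v 0 * n 0 + v 1 * n 1)) * (X - C (2 * (v 0 * n 0 + v 1 * n 1))) := by
  simp only [Matrix.charpoly, Matrix.det_succ_row_zero, Fin.sum_univ_succ, Matrix.det_fin_zero]
  simp [convectiveJacobian, Matrix.charmatrix_apply, Fin.succAbove, Matrix.submatrix,
    Matrix.diagonal, map_ofNat C 2]
  ring

theorem sweJacobian_eq_convectiveJacobian (n : Fin 2 → ℝ) {η b : ℝ} (q : Fin 2 → ℝ)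
    (hH : η - b ≠ 0) :
    sweJacobian n ![η, q 0, q 1, b] = convectiveJacobian (fun i => q i / (η - b)) n := by
  ext i j
  fin_cases i
  · fin_cases j <;> simp [sweJacobian, sweExplicitFlux, convectiveJacobian]
  · simp [sweJacobian, sweExplicitFlux]
    rw [fderiv_momentumFlux_apply n 1 (by simpa using hH)]
    fin_cases j <;> simp [convectiveJacobian] <;> field_simp
  · simp [sweJacobian, sweExplicitFlux]
    rw [fderiv_momentumFlux_apply n 2 (by simpa using hH)]
    fin_cases j <;> simp [convectiveJacobian] <;> field_simp
  · fin_cases j <;> simp [sweJacobian, sweExplicitFlux, convectiveJacobian]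

theorem swe_explicit_eigenvalues_general (n : Fin 2 → ℝ)
    (η b : ℝ) (q v : Fin 2 → ℝ) (hH : 0 < η - b)
    (hv : v = fun i => q i / (η - b)) :
    (sweJacobian n ![η, q 0, q 1, b]).charpoly
      = X ^ 2 * (X - C (v 0 * n 0 + v 1 * n 1)) * (X - C (2 * (v 0 * n 0 + v 1 * n 1))) := by
  rw [sweJacobian_eq_convectiveJacobian n q hH.ne', charpoly_convectiveJacobian, hv]

/-- For the shallow water equations with splitting `F_E(Q) = (0, v⊗q, 0)` where
`q = Hv`, the Jacobian of `F_E·n` with respect to `Q = (η, q, b)` (with `H = η − b > 0`)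
has eigenvalues `λ₁ = λ₂ = 0`, `λ₃ = v·n`, `λ₄ = 2 v·n`: its characteristic polynomial
is `X² (X − v·n)(X − 2v·n)`. -/
theorem swe_explicit_eigenvalues (n : Fin 2 → ℝ) (hn : n 0 ^ 2 + n 1 ^ 2 = 1)
    (η b : ℝ) (q v : Fin 2 → ℝ) (hH : 0 < η - b)
    (hv : v = fun i => q i / (η - b)) :
    (sweJacobian n ![η, q 0, q 1, b]).charpoly
      = X ^ 2 * (X - C (v 0 * n 0 + v 1 * n 1)) * (X - C (2 * (v 0 * n 0 + v 1 * n 1))) :=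
  swe_explicit_eigenvalues_general n η b q v hH hv
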